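/- arXiv:2502.03061 — 3 statements merged into one kernel-verified Lean document; each statement's English description precedes it below -/
import Mathlib

section
/- Let n ≥ 2 and let Δ_i > 0 for i ∈ {2,…,n}. Let Δ_min = min_i Δ_i. Then the equation Σ_{i=2}^{n} 1/(w·Δ_i² − 1)² = 1 has a unique solution w* in the interval [2/Δ_min², (1+√(n−1))/Δ_min²]. -/
open Finset

/-- The equation `∑_{i ≠ i*} 1 / (w Δ_i² - 1)² = 1` has a unique solution in the interval
`[2 / Δ_min², (1 + √(n-1)) / Δ_min²]`, where `Δ_min` is the minimal gap. -/
theorem stmt4 (n : ℕ) (hn : 2 ≤ n) (istar : Fin n) (Δ : Fin n → ℝ)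
    (hΔ : ∀ i, i ≠ istar → 0 < Δ i)
    (hne : (Finset.univ.erase istar).Nonempty)
    (Δmin : ℝ) (hΔmin : Δmin = (Finset.univ.erase istar).inf' hne Δ) :
    ∃! w : ℝ,
      w ∈ Set.Icc (2 / Δmin ^ 2) ((1 + Real.sqrt (n - 1)) / Δmin ^ 2) ∧
      ∑ i ∈ Finset.univ.erase istar, 1 / (w * Δ i ^ 2 - 1) ^ 2 = 1 := by
  set s := Finset.univ.erase istar with hs
  have hΔpos : ∀ i ∈ s, 0 < Δ i := fun i hi => hΔ i (Finset.mem_erase.mp hi).1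
  obtain ⟨j, hj, hjval⟩ := Finset.exists_mem_eq_inf' hne Δ
  have hΔj : Δmin = Δ j := by rw [hΔmin, hjval]
  have hmpos : 0 < Δmin := hΔj ▸ hΔpos j hj
  have hm2 : (0:ℝ) < Δmin ^ 2 := by positivity
  have hΔminle : ∀ i ∈ s, Δmin ≤ Δ i := fun i hi => hΔmin ▸ Finset.inf'_le _ hi
  set a := 2 / Δmin ^ 2 with ha
  set b := (1 + Real.sqrt (n - 1)) / Δmin ^ 2 with hb
  have hn1 : (1:ℝ) ≤ (n:ℝ) - 1 := by
    have : (2:ℝ) ≤ n := by exact_mod_cast hn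
    linarith
  have hsq : Real.sqrt (n - 1) ^ 2 = (n:ℝ) - 1 := Real.sq_sqrt (by linarith)
  have hsqrt1 : (1:ℝ) ≤ Real.sqrt (n - 1) := by
    nlinarith [Real.sqrt_nonneg ((n:ℝ) - 1), hsq]
  have hab : a ≤ b := by
    rw [ha, hb]
    gcongr
    linarith
  have ham : a * Δmin ^ 2 = 2 := div_mul_cancel₀ _ (ne_of_gt hm2)
  have hbm : b * Δmin ^ 2 = 1 + Real.sqrt (n - 1) := div_mul_cancel₀ _ (ne_of_gt hm2)
  have hapos : 0 < a := by positivity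
  -- key lower bound on denominators
  have hkey : ∀ w, a ≤ w → ∀ i ∈ s, 1 ≤ w * Δ i ^ 2 - 1 := by
    intro w hw i hi
    have h1 : Δmin ^ 2 ≤ Δ i ^ 2 := by
      have := hΔminle i hi
      nlinarith [hmpos]
    have : a * Δmin ^ 2 ≤ w * Δ i ^ 2 :=
      mul_le_mul hw h1 (le_of_lt hm2) (le_trans hapos.le hw)
    linarith [ham ▸ this]
  set f : ℝ → ℝ := fun w => ∑ i ∈ s, 1 / (w * Δ i ^ 2 - 1) ^ 2 with hf
  -- strict antitonicity
  have hanti : ∀ w1 w2, a ≤ w1 → w1 < w2 → f w2 < f w1 := by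
    intro w1 w2 h1 h12
    apply Finset.sum_lt_sum_of_nonempty hne
    intro i hi
    have hd1 : 1 ≤ w1 * Δ i ^ 2 - 1 := hkey w1 h1 i hi
    have hΔi : 0 < Δ i := hΔpos i hi
    have hd2 : w1 * Δ i ^ 2 - 1 < w2 * Δ i ^ 2 - 1 := by nlinarith
    have hq : (w1 * Δ i ^ 2 - 1) ^ 2 < (w2 * Δ i ^ 2 - 1) ^ 2 := by nlinarith
    apply one_div_lt_one_div_of_lt (by positivity) hq
  -- continuity
  have hcont : ContinuousOn f (Set.Icc a b) := by
    apply continuousOn_finset_sum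
    intro i hi
    apply ContinuousOn.div continuousOn_const
    · exact (((continuousOn_id.mul continuousOn_const).sub continuousOn_const).pow 2)
    · intro w hw
      have := hkey w hw.1 i hi
      positivity
  -- f a ≥ 1
  have hfa : 1 ≤ f a := by
    have hterm : 1 / (a * Δ j ^ 2 - 1) ^ 2 = 1 := by
      rw [← hΔj, ham]; norm_num
    calc (1:ℝ) = 1 / (a * Δ j ^ 2 - 1) ^ 2 := hterm.symm
    _ ≤ f a := Finset.single_le_sum (f := fun i => 1 / (a * Δ i ^ 2 - 1) ^ 2) (fun i hi => by
        have := hkey a le_rfl i hi; positivity) hj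
  -- f b ≤ 1
  have hcard : (s.card : ℝ) = (n:ℝ) - 1 := by
    rw [hs, Finset.card_erase_of_mem (Finset.mem_univ istar)]
    simp only [Finset.card_univ, Fintype.card_fin]
    have : 1 ≤ n := by omega
    push_cast [Nat.cast_sub this]
    ring
  have hfb : f b ≤ 1 := by
    have hbound : ∀ i ∈ s, 1 / (b * Δ i ^ 2 - 1) ^ 2 ≤ 1 / ((n:ℝ) - 1) := by
      intro i hi
      have h1 : Δmin ^ 2 ≤ Δ i ^ 2 := by
        have := hΔminle i hi
        nlinarith [hmpos]
      have hbpos : 0 < b := by positivity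
      have h2 : Real.sqrt (n - 1) ≤ b * Δ i ^ 2 - 1 := by
        have : b * Δmin ^ 2 ≤ b * Δ i ^ 2 := by nlinarith
        linarith [hbm ▸ this]
      have h3 : (n:ℝ) - 1 ≤ (b * Δ i ^ 2 - 1) ^ 2 := by nlinarith
      apply one_div_le_one_div_of_le (by linarith) h3
    calc f b ≤ ∑ _i ∈ s, 1 / ((n:ℝ) - 1) := Finset.sum_le_sum hbound
    _ = (s.card : ℝ) * (1 / ((n:ℝ) - 1)) := by rw [Finset.sum_const, nsmul_eq_mul]
    _ = 1 := by rw [hcard]; field_simp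
  -- existence via IVT
  have hivt := intermediate_value_Icc' hab hcont
  have h1mem : (1:ℝ) ∈ Set.Icc (f b) (f a) := ⟨hfb, hfa⟩
  obtain ⟨w, hw, hfw⟩ := hivt h1mem
  refine ⟨w, ⟨hw, hfw⟩, ?_⟩
  rintro y ⟨hy, hfy⟩
  have hfy' : f y = 1 := hfy
  by_contra hne'
  rcases lt_or_gt_of_ne hne' with h | h
  · have := hanti y w hy.1 h
    rw [hfw, hfy'] at this
    exact lt_irrefl 1 this
  · have := hanti w y hw.1 h
    rw [hfw, hfy'] at this
    exact lt_irrefl 1 this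
end

section
/- Fix weights w_s > 0 for s ∈ [n] summing to 1, a matrix A ∈ ℝ^{k×n} with strictly positive entries and columns in the simplex, a matrix μ ∈ ℝ^{k×n}, indices i* ≠ i, and suppose Δ_i := A_{i*}ᵀμ_{i*} − A_iᵀμ_i > 0. Then the infimum over μ' ∈ ℝ^{k×n} subject to A_iᵀμ'_i ≥ A_{i*}ᵀμ'_{i*} of Σ_{s∈[n]} w_s Σ_{j∈[k]} A_{j,s}(μ_{j,s} − μ'_{j,s})²/2 equals (Δ_i²/2)·(w_{i*}w_i)/(w_{i*} + w_i), attained by modifying only columns i* and i of μ. -/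
open Finset

private lemma cs_aux {k : ℕ} (A d : Fin k → ℝ) (hA0 : ∀ j, 0 ≤ A j)
    (hA1 : ∑ j, A j = 1) : (∑ j, A j * d j) ^ 2 ≤ ∑ j, A j * d j ^ 2 := by
  have h := Finset.sum_mul_sq_le_sq_mul_sq Finset.univ (fun j => Real.sqrt (A j))
      (fun j => Real.sqrt (A j) * d j)
  have e1 : ∀ j : Fin k, Real.sqrt (A j) * (Real.sqrt (A j) * d j) = A j * d j := by
    intro j; rw [← mul_assoc, Real.mul_self_sqrt (hA0 j)]
  have e3 : ∀ j : Fin k, (Real.sqrt (A j) * d j) ^ 2 = A j * d j ^ 2 := by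
    intro j; rw [mul_pow, Real.sq_sqrt (hA0 j)]
  calc (∑ j, A j * d j) ^ 2 = (∑ j, Real.sqrt (A j) * (Real.sqrt (A j) * d j)) ^ 2 := by
        rw [Finset.sum_congr rfl fun j _ => (e1 j).symm]
    _ ≤ (∑ j, Real.sqrt (A j) ^ 2) * ∑ j, (Real.sqrt (A j) * d j) ^ 2 := h
    _ = ∑ j, A j * d j ^ 2 := by
        rw [Finset.sum_congr rfl fun j _ => Real.sq_sqrt (hA0 j), hA1, one_mul,
          Finset.sum_congr rfl fun j _ => e3 j]

private lemma lb_aux (w1 w2 a b Δ : ℝ) (h1 : 0 < w1) (h2 : 0 < w2) (hΔ : 0 < Δ)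
    (hab : a - b ≥ Δ) : Δ ^ 2 * (w1 * w2) / (w1 + w2) ≤ w1 * a ^ 2 + w2 * b ^ 2 := by
  rw [div_le_iff₀ (by linarith)]
  have h3 : (0:ℝ) ≤ (a - b - Δ) * (a - b + Δ) :=
    mul_nonneg (by linarith) (by linarith)
  nlinarith [sq_nonneg (w1 * a + w2 * b), mul_pos h1 h2]

/-- Lemma (non-separator `f_i`): the transportation cost
`inf { ∑_s w_s ∑_j A_{j,s} (μ_{j,s} - μ'_{j,s})²/2 : A_iᵀμ'_i ≥ A_{i*}ᵀμ'_{i*} }`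
equals `(Δ_i²/2) · w_{i*} w_i / (w_{i*} + w_i)`, and is attained by a `μ'` modifying
only columns `i*` and `i` of `μ`. -/
theorem stmt12 (k n : ℕ) (w : Fin n → ℝ) (hw : ∀ s, 0 < w s) (hw1 : ∑ s, w s = 1)
    (A : Fin k → Fin n → ℝ) (hA0 : ∀ j s, 0 < A j s) (hA1 : ∀ s, ∑ j, A j s = 1)
    (μ : Fin k → Fin n → ℝ) (istar i : Fin n) (hne : i ≠ istar)
    (hΔ : 0 < ∑ j, A j istar * μ j istar - ∑ j, A j i * μ j i) :
    letI Δi : ℝ := ∑ j, A j istar * μ j istar - ∑ j, A j i * μ j i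
    IsLeast
      {S : ℝ | ∃ μ' : Fin k → Fin n → ℝ,
        (∑ j, A j i * μ' j i ≥ ∑ j, A j istar * μ' j istar) ∧
        S = ∑ s, w s * ∑ j, A j s * (μ j s - μ' j s) ^ 2 / 2}
      (Δi ^ 2 / 2 * (w istar * w i) / (w istar + w i)) ∧
    ∃ μ' : Fin k → Fin n → ℝ,
      (∑ j, A j i * μ' j i ≥ ∑ j, A j istar * μ' j istar) ∧
      (∀ s, s ≠ istar → s ≠ i → ∀ j, μ' j s = μ j s) ∧
      ∑ s, w s * ∑ j, A j s * (μ j s - μ' j s) ^ 2 / 2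
        = Δi ^ 2 / 2 * (w istar * w i) / (w istar + w i) := by
  set Δi : ℝ := ∑ j, A j istar * μ j istar - ∑ j, A j i * μ j i with hΔi
  set w1 := w istar with hw1def
  set w2 := w i with hw2def
  have hw1p : 0 < w1 := hw istar
  have hw2p : 0 < w2 := hw i
  have hws : 0 < w1 + w2 := by linarith
  set l : ℝ := Δi * (w1 * w2) / (w1 + w2) with hl
  set μ' : Fin k → Fin n → ℝ := fun j s =>
    if s = istar then μ j istar - l / w1 else if s = i then μ j i + l / w2 else μ j s
    with hμ'
  have hμi' : ∀ j, μ' j i = μ j i + l / w2 := by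
    intro j; simp [hμ', hne]
  have hμistar' : ∀ j, μ' j istar = μ j istar - l / w1 := by
    intro j; simp [hμ']
  have hμo : ∀ s, s ≠ istar → s ≠ i → ∀ j, μ' j s = μ j s := by
    intro s h1 h2 j; simp [hμ', h1, h2]
  -- key identity l/w1 + l/w2 = Δi
  have hlid : l / w1 + l / w2 = Δi := by
    rw [hl]; field_simp; ring
  -- constraint holds for μ'
  have hcon : ∑ j, A j i * μ' j i ≥ ∑ j, A j istar * μ' j istar := by
    have e1 : ∑ j, A j i * μ' j i = (∑ j, A j i * μ j i) + l / w2 := by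
      rw [Finset.sum_congr rfl fun j _ => by rw [hμi' j, mul_add], Finset.sum_add_distrib,
        ← Finset.sum_mul, hA1, one_mul]
    have e2 : ∑ j, A j istar * μ' j istar = (∑ j, A j istar * μ j istar) - l / w1 := by
      rw [Finset.sum_congr rfl fun j _ => by rw [hμistar' j, mul_sub], Finset.sum_sub_distrib,
        ← Finset.sum_mul, hA1, one_mul]
    rw [e1, e2]
    have : ∑ j, A j istar * μ j istar - ∑ j, A j i * μ j i = Δi := hΔi.symm
    linarith
  -- cost of μ'
  have hcost : ∑ s, w s * ∑ j, A j s * (μ j s - μ' j s) ^ 2 / 2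
      = Δi ^ 2 / 2 * (w1 * w2) / (w1 + w2) := by
    have hz : ∀ s ∈ Finset.univ, s ∉ ({istar, i} : Finset (Fin n)) →
        w s * ∑ j, A j s * (μ j s - μ' j s) ^ 2 / 2 = 0 := by
      intro s _ hs
      simp only [Finset.mem_insert, Finset.mem_singleton, not_or] at hs
      have hz1 : ∀ j : Fin k, A j s * (μ j s - μ' j s) ^ 2 / 2 = 0 := by
        intro j; rw [hμo s hs.1 hs.2 j]; ring
      rw [Finset.sum_congr rfl fun j _ => hz1 j]
      simp
    rw [← Finset.sum_subset (Finset.subset_univ ({istar, i} : Finset (Fin n))) hz,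
      Finset.sum_pair (Ne.symm hne)]
    have e1 : ∑ j, A j istar * (μ j istar - μ' j istar) ^ 2 / 2 = (l / w1) ^ 2 / 2 := by
      have t1 : ∀ j : Fin k, A j istar * (μ j istar - μ' j istar) ^ 2 / 2
          = A j istar * ((l / w1) ^ 2 / 2) := by
        intro j; rw [hμistar' j]; ring
      rw [Finset.sum_congr rfl fun j _ => t1 j, ← Finset.sum_mul, hA1, one_mul]
    have e2 : ∑ j, A j i * (μ j i - μ' j i) ^ 2 / 2 = (l / w2) ^ 2 / 2 := by
      have t2 : ∀ j : Fin k, A j i * (μ j i - μ' j i) ^ 2 / 2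
          = A j i * ((l / w2) ^ 2 / 2) := by
        intro j; rw [hμi' j]; ring
      rw [Finset.sum_congr rfl fun j _ => t2 j, ← Finset.sum_mul, hA1, one_mul]
    rw [e1, e2, hl]
    field_simp
    ring
  refine ⟨⟨⟨μ', hcon, hcost.symm⟩, ?_⟩, μ', hcon, hμo, hcost⟩
  rintro S ⟨ν, hνcon, rfl⟩
  set a := ∑ j, A j istar * (μ j istar - ν j istar) with ha
  set b := ∑ j, A j i * (μ j i - ν j i) with hb
  have hab : a - b ≥ Δi := by
    have ea : a = (∑ j, A j istar * μ j istar) - ∑ j, A j istar * ν j istar := by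
      rw [ha, Finset.sum_congr rfl fun j _ => mul_sub _ _ _, Finset.sum_sub_distrib]
    have eb : b = (∑ j, A j i * μ j i) - ∑ j, A j i * ν j i := by
      rw [hb, Finset.sum_congr rfl fun j _ => mul_sub _ _ _, Finset.sum_sub_distrib]
    rw [hΔi, ea, eb]; linarith
  have hca : a ^ 2 ≤ ∑ j, A j istar * (μ j istar - ν j istar) ^ 2 :=
    cs_aux (fun j => A j istar) (fun j => μ j istar - ν j istar)
      (fun j => (hA0 j istar).le) (hA1 istar)
  have hcb : b ^ 2 ≤ ∑ j, A j i * (μ j i - ν j i) ^ 2 :=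
    cs_aux (fun j => A j i) (fun j => μ j i - ν j i)
      (fun j => (hA0 j i).le) (hA1 i)
  have hsub : ∑ s ∈ ({istar, i} : Finset (Fin n)), w s * ∑ j, A j s * (μ j s - ν j s) ^ 2 / 2
      ≤ ∑ s, w s * ∑ j, A j s * (μ j s - ν j s) ^ 2 / 2 := by
    apply Finset.sum_le_sum_of_subset_of_nonneg (Finset.subset_univ _)
    intro s _ _
    apply mul_nonneg (hw s).le
    apply Finset.sum_nonneg
    intro j _
    have h1 := (hA0 j s).le
    positivity
  rw [Finset.sum_pair (Ne.symm hne)] at hsub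
  have hdiv1 : ∑ j, A j istar * (μ j istar - ν j istar) ^ 2 / 2
      = (∑ j, A j istar * (μ j istar - ν j istar) ^ 2) / 2 := by
    rw [Finset.sum_div]
  have hdiv2 : ∑ j, A j i * (μ j i - ν j i) ^ 2 / 2
      = (∑ j, A j i * (μ j i - ν j i) ^ 2) / 2 := by
    rw [Finset.sum_div]
  have key := lb_aux w1 w2 a b Δi hw1p hw2p hΔ hab
  have h1 : w1 * (a ^ 2 / 2) ≤ w1 * ((∑ j, A j istar * (μ j istar - ν j istar) ^ 2) / 2) :=
    mul_le_mul_of_nonneg_left (by linarith) hw1p.le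
  have h2 : w2 * (b ^ 2 / 2) ≤ w2 * ((∑ j, A j i * (μ j i - ν j i) ^ 2) / 2) :=
    mul_le_mul_of_nonneg_left (by linarith) hw2p.le
  have hq : Δi ^ 2 / 2 * (w1 * w2) / (w1 + w2) = (Δi ^ 2 * (w1 * w2) / (w1 + w2)) / 2 := by
    ring
  rw [hdiv1] at hsub
  rw [hdiv2] at hsub
  have h1' : w1 * (a ^ 2 / 2) = w1 * a ^ 2 / 2 := by ring
  have h2' : w2 * (b ^ 2 / 2) = w2 * b ^ 2 / 2 := by ring
  rw [hq]
  linarith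
end

section
/- Fix weights w_s > 0 for s ∈ [n] summing to 1, a matrix A ∈ ℝ^{k×n} with strictly positive entries and columns A_s in the simplex, a vector μ ∈ ℝ^k, indices i* ≠ i with A_{i*} ≠ A_i, and suppose Δ_i := (A_{i*} − A_i)ᵀμ > 0. Then the infimum over μ' ∈ ℝ^k subject to A_iᵀμ' ≥ A_{i*}ᵀμ' of Σ_{s∈[n]} w_s Σ_{j∈[k]} A_{j,s}(μ_j − μ'_j)²/2 equals Δ_i² / (2 Σ_{j∈[k]} (A_{j,i*} − A_{j,i})² / (Σ_{l∈[n]} w_l A_{j,l})). -/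
open Finset

/-- Lemma (separator `f_i`): the transportation cost in the separator setting,
`inf { ∑_s w_s ∑_j A_{j,s} (μ_j - μ'_j)²/2 : A_iᵀμ' ≥ A_{i*}ᵀμ' }`, equals
`Δ_i² / (2 ∑_j (A_{j,i*} - A_{j,i})² / (∑_l w_l A_{j,l}))`. -/
theorem stmt13 (k n : ℕ) (w : Fin n → ℝ) (hw : ∀ s, 0 < w s) (hw1 : ∑ s, w s = 1)
    (A : Fin k → Fin n → ℝ) (hA0 : ∀ j s, 0 < A j s) (hA1 : ∀ s, ∑ j, A j s = 1)
    (μ : Fin k → ℝ) (istar i : Fin n) (hne : i ≠ istar)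
    (hAne : (fun j => A j istar) ≠ fun j => A j i)
    (hΔ : 0 < ∑ j, (A j istar - A j i) * μ j) :
    IsGLB
      {S : ℝ | ∃ μ' : Fin k → ℝ,
        (∑ j, A j i * μ' j ≥ ∑ j, A j istar * μ' j) ∧
        S = ∑ s, w s * ∑ j, A j s * (μ j - μ' j) ^ 2 / 2}
      ((∑ j, (A j istar - A j i) * μ j) ^ 2 /
        (2 * ∑ j, (A j istar - A j i) ^ 2 / (∑ l, w l * A j l))) := by
  classical
  set c : Fin k → ℝ := fun j => A j istar - A j i with hc
  set B : Fin k → ℝ := fun j => ∑ l, w l * A j l with hBdef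
  have hn : 0 < n := by
    rcases Nat.eq_zero_or_pos n with h | h
    · subst h; simp at hw1
    · exact h
  have hB : ∀ j, 0 < B j := by
    intro j
    apply Finset.sum_pos
    · intro l _; exact mul_pos (hw l) (hA0 j l)
    · exact univ_nonempty_iff.mpr ⟨⟨0, hn⟩⟩
  have hD : 0 < ∑ j, c j ^ 2 / B j := by
    have hcne : ∃ j, c j ≠ 0 := by
      by_contra h
      push_neg at h
      apply hAne
      funext j
      have := h j
      simp only [hc] at this
      linarith
    obtain ⟨j0, hj0⟩ := hcne
    apply Finset.sum_pos'
    · intro j _; exact div_nonneg (sq_nonneg _) (hB j).le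
    · exact ⟨j0, mem_univ _, div_pos (by positivity) (hB j0)⟩
  set Δ : ℝ := ∑ j, c j * μ j with hΔdef
  set D : ℝ := ∑ j, c j ^ 2 / B j with hDdef
  -- rewrite the objective
  have key : ∀ μ' : Fin k → ℝ,
      (∑ s, w s * ∑ j, A j s * (μ j - μ' j) ^ 2 / 2)
        = (∑ j, B j * (μ j - μ' j) ^ 2) / 2 := by
    intro μ'
    rw [Finset.sum_div]
    simp_rw [Finset.mul_sum]
    rw [Finset.sum_comm]
    refine Finset.sum_congr rfl fun j _ => ?_
    have : B j * (μ j - μ' j) ^ 2 / 2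
        = ∑ s, (w s * A j s) * ((μ j - μ' j) ^ 2 / 2) := by
      rw [mul_div_assoc, hBdef, Finset.sum_mul]
    rw [this]
    exact Finset.sum_congr rfl fun s _ => by ring
  constructor
  · -- lower bound
    rintro S ⟨μ', hcon, rfl⟩
    rw [key μ']
    -- constraint: ∑ c j * μ' j ≤ 0
    have hcon' : ∑ j, c j * μ' j ≤ 0 := by
      have : ∑ j, c j * μ' j = (∑ j, A j istar * μ' j) - ∑ j, A j i * μ' j := by
        rw [← Finset.sum_sub_distrib]
        exact Finset.sum_congr rfl fun j _ => by simp [hc]; ring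
      rw [this]
      linarith [hcon]
    have ht : Δ ≤ ∑ j, c j * (μ j - μ' j) := by
      have : ∑ j, c j * (μ j - μ' j) = Δ - ∑ j, c j * μ' j := by
        rw [hΔdef, ← Finset.sum_sub_distrib]
        exact Finset.sum_congr rfl fun j _ => by ring
      rw [this]; linarith
    -- Cauchy-Schwarz
    have hCS : (∑ j, c j * (μ j - μ' j)) ^ 2
        ≤ D * ∑ j, B j * (μ j - μ' j) ^ 2 := by
      have h1 := Finset.sum_mul_sq_le_sq_mul_sq Finset.univ
        (fun j => c j / Real.sqrt (B j))
        (fun j => Real.sqrt (B j) * (μ j - μ' j))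
      have e1 : ∀ j : Fin k, c j / Real.sqrt (B j) * (Real.sqrt (B j) * (μ j - μ' j))
          = c j * (μ j - μ' j) := by
        intro j
        have hs : Real.sqrt (B j) ≠ 0 := ne_of_gt (Real.sqrt_pos.mpr (hB j))
        field_simp
      have e2 : ∀ j : Fin k, (c j / Real.sqrt (B j)) ^ 2 = c j ^ 2 / B j := by
        intro j
        rw [div_pow, Real.sq_sqrt (hB j).le]
      have e3 : ∀ j : Fin k, (Real.sqrt (B j) * (μ j - μ' j)) ^ 2
          = B j * (μ j - μ' j) ^ 2 := by
        intro j
        rw [mul_pow, Real.sq_sqrt (hB j).le]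
      simp_rw [e1, e2, e3] at h1
      exact h1
    have hΔ2 : Δ ^ 2 ≤ (∑ j, c j * (μ j - μ' j)) ^ 2 :=
      pow_le_pow_left₀ hΔ.le ht 2
    rw [div_le_iff₀ (by positivity)]
    nlinarith [hCS, hΔ2]
  · -- greatest: the value is attained
    intro b hb
    apply hb
    refine ⟨fun j => μ j - (Δ / D) * (c j / B j), ?_, ?_⟩
    · have hz : ∑ j, c j * (μ j - (Δ / D) * (c j / B j)) = 0 := by
        have : ∑ j, c j * (μ j - (Δ / D) * (c j / B j))
            = Δ - (Δ / D) * D := by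
          rw [hΔdef, hDdef, Finset.mul_sum, ← Finset.sum_sub_distrib]
          refine Finset.sum_congr rfl fun j _ => ?_
          have hBj := (hB j).ne'
          field_simp
        rw [this, div_mul_cancel₀ _ hD.ne']
        ring
      have : (∑ j, A j istar * (μ j - (Δ / D) * (c j / B j)))
          - ∑ j, A j i * (μ j - (Δ / D) * (c j / B j)) = 0 := by
        rw [← Finset.sum_sub_distrib, ← hz]
        exact Finset.sum_congr rfl fun j _ => by simp [hc]; ring
      linarith [this]
    · rw [key]
      have : ∑ j, B j * (μ j - (μ j - (Δ / D) * (c j / B j))) ^ 2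
          = (Δ / D) ^ 2 * D := by
        rw [hDdef, Finset.mul_sum]
        refine Finset.sum_congr rfl fun j _ => ?_
        have hBj := (hB j).ne'
        field_simp
        ring
      rw [this]
      rw [div_pow, hDdef]
      field_simp
end
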